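/- arXiv:2006.08309 — 2 statements merged into one kernel-verified Lean document; each statement's English description precedes it below -/
import Mathlib

section
/- For every real γ > (1 + √5)/2, the quantity α := (γ² − 2) / (−8 − γ + 6γ² − γ³ + (−6 + 3γ + γ²)√(γ² − 1)) is strictly positive (in particular, its denominator −8 − γ + 6γ² − γ³ + (−6 + 3γ + γ²)√(γ² − 1) is nonzero). -/
/-- For every real `γ` greater than the golden ratio `(1 + √5)/2`, the quantity
`α = (γ² − 2)/(−8 − γ + 6γ² − γ³ + (−6 + 3γ + γ²)√(γ² − 1))` is strictly positive;
in particular its denominator is nonzero. -/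
theorem alpha_pos (γ : ℝ) (hγ : (1 + Real.sqrt 5) / 2 < γ) :
    (-8 - γ + 6 * γ ^ 2 - γ ^ 3 + (-6 + 3 * γ + γ ^ 2) * Real.sqrt (γ ^ 2 - 1)) ≠ 0 ∧
    0 < (γ ^ 2 - 2) /
      (-8 - γ + 6 * γ ^ 2 - γ ^ 3 + (-6 + 3 * γ + γ ^ 2) * Real.sqrt (γ ^ 2 - 1)) := by
  have h5 : (2:ℝ) < Real.sqrt 5 := by
    nlinarith [Real.sq_sqrt (by norm_num : (0:ℝ) ≤ 5), Real.sqrt_nonneg 5]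
  have hg : (3/2 : ℝ) < γ := by linarith
  set s := Real.sqrt (γ ^ 2 - 1) with hs
  have hs0 : 0 ≤ s := Real.sqrt_nonneg _
  have hs2 : s ^ 2 = γ ^ 2 - 1 := Real.sq_sqrt (by nlinarith)
  have hspos : 0 < s := by
    rcases hs0.lt_or_eq with h | h
    · exact h
    · exfalso; nlinarith [hs2]
  have hD : 0 < -8 - γ + 6 * γ ^ 2 - γ ^ 3 + (-6 + 3 * γ + γ ^ 2) * s := by
    by_contra h
    push_neg at h
    have ha : 0 < -6 + 3 * γ + γ ^ 2 := by nlinarith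
    have hb : 0 ≤ γ ^ 3 - 6 * γ ^ 2 + γ + 8 → False := by
      intro _
      nlinarith [sq_nonneg (3*γ - 5), mul_pos ha hspos, hs2, sq_nonneg s,
        mul_nonneg (mul_nonneg (by nlinarith : (0:ℝ) ≤ γ^2 - 2) (by nlinarith : (0:ℝ) ≤ γ + 1)) (sq_nonneg (3*γ-5))]
    apply hb
    nlinarith [mul_pos ha hspos]
  refine ⟨ne_of_gt hD, div_pos (by nlinarith) hD⟩
end

section
/- Let γ > (1 + √5)/2 be real. Set s := √(γ² − 1), t := √(1 + γ − γ² + (γ − 1)s), D := −1 − 3γ + 2γ² + (3 − 2γ)s, α := (γ² − 2)/(−8 − γ + 6γ² − γ³ + (−6 + 3γ + γ²)s), and define vectors v₁, …, v₅ ∈ ℝ² by vⱼ = √α · (p₁ⱼ, p₂ⱼ), where p₁₁ = D·t/(−2 − γD), p₁₂ = t/γ, p₁₃ = −s/((1+γ)t), p₁₄ = (1 − γ² − γs)·t/(γ + γ²), p₁₅ = −2(γ−1)t/(γ(2 + γD)), p₂₁ = p₂₂ = p₂₄ = 0, p₂₃ = (1 + γ + s)/(1 + γ), p₂₅ = 1.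 Then the following six inequalities hold: (1) ⟨v₃, v₅ − v₃ − v₂⟩ ≥ 0; (2) ⟨v₂, v₅ + (γ−1)(v₁+v₂)⟩ ≥ 0; (3) ⟨v₄, v₅ − v₃ − v₄⟩ ≥ 0; (4) ⟨v₂ − v₄, (v₃+v₄) + (γ−1)(v₁+v₂)⟩ ≥ 0; (5) ⟨v₄, −(v₃+v₄) − (γ−1)(v₁+v₂)⟩ + ⟨v₂, v₅ + (γ−1)(v₁+v₂)⟩ ≥ 0; (6) ⟨v₂, (v₃+v₄) + (γ−1)(v₁+v₂)⟩ + ⟨v₄, v₅ − v₃ − v₄⟩ ≥ 0; and moreover the normalization ‖v₅‖² + γ‖v₂‖² + (γ−1)‖v₁ + v₂‖² = 1 holds. (Feasibility of the constructed rank-two solution X_f = αP̄ᵀP̄ for the performance-estimation SDP.) -/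
/-!
All six quantities in fact vanish. Up to the factor `√α`, the vectors `v₁, v₂, v₄` are horizontal,
while `w = v₅ + (γ - 1)(v₁ + v₂)` and `u = v₅ - v₃ - v₄` are vertical; conditions (2)–(6) are
combinations of `v₂, v₄ ⟂ w, u`, and (1) is a direct identity. The radicals collapse through
`(2 + γD)(γ - 1 + s) = 2(γ - 1)t²`, which turns the first coordinate of `v₅` into
`-√α (γ - 1 + s)/(γt)`; the normalization then says that `α` is the reciprocal of
`1 + t²/γ + 2(γ + s)/(γt²)`, which is what the defining formula for `α` reduces to.
-/

open Matrix Real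

theorem dotProduct_eq_zero_of_orthogonal {R n : Type*} [CommRing R] [Fintype n] (c : R)
    {v₁ v₂ v₃ v₄ v₅ : n → R}
    (h₂w : v₂ ⬝ᵥ (v₅ + c • (v₁ + v₂)) = 0) (h₄w : v₄ ⬝ᵥ (v₅ + c • (v₁ + v₂)) = 0)
    (h₂u : v₂ ⬝ᵥ (v₅ - v₃ - v₄) = 0) (h₄u : v₄ ⬝ᵥ (v₅ - v₃ - v₄) = 0) :
    (v₂ - v₄) ⬝ᵥ ((v₃ + v₄) + c • (v₁ + v₂)) = 0 ∧
    v₄ ⬝ᵥ (-(v₃ + v₄) - c • (v₁ + v₂)) + v₂ ⬝ᵥ (v₅ + c • (v₁ + v₂)) = 0 ∧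
    v₂ ⬝ᵥ ((v₃ + v₄) + c • (v₁ + v₂)) + v₄ ⬝ᵥ (v₅ - v₃ - v₄) = 0 := by
  have hsplit : (v₃ + v₄) + c • (v₁ + v₂) = (v₅ + c • (v₁ + v₂)) - (v₅ - v₃ - v₄) := by abel
  have hneg : -(v₃ + v₄) - c • (v₁ + v₂) = -((v₅ + c • (v₁ + v₂)) - (v₅ - v₃ - v₄)) := by
    rw [← hsplit]; abel
  refine ⟨?_, ?_, ?_⟩
  · rw [hsplit, sub_dotProduct, dotProduct_sub v₂ (v₅ + _), dotProduct_sub v₄ (v₅ + _), h₂w, h₄w,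
      h₂u, h₄u, sub_zero, sub_zero]
  · rw [hneg, dotProduct_neg, dotProduct_sub v₄ (v₅ + _), h₂w, h₄w, h₄u, sub_zero, neg_zero,
      add_zero]
  · rw [hsplit, dotProduct_sub v₂ (v₅ + _), h₂w, h₂u, h₄u, sub_zero, add_zero]

theorem vec2_dotProduct_eq_zero {R : Type*} [CommRing R] {x y : Fin 2 → R} (hx : x 1 = 0)
    (hy : y 0 = 0) : x ⬝ᵥ y = 0 := by
  rw [vec2_dotProduct, hx, hy, mul_zero, zero_mul, add_zero]

theorem rank_two_feasible_of_coords {γ r a₁ a₂ a₃ a₄ a₅ b₃ : ℝ} {v₁ v₂ v₃ v₄ v₅ : Fin 2 → ℝ}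
    (hv₁ : v₁ = r • ![a₁, 0]) (hv₂ : v₂ = r • ![a₂, 0]) (hv₃ : v₃ = r • ![a₃, b₃])
    (hv₄ : v₄ = r • ![a₄, 0]) (hv₅ : v₅ = r • ![a₅, 1])
    (hw : a₅ + (γ - 1) * (a₁ + a₂) = 0) (hu : a₅ = a₃ + a₄)
    (h₃ : a₃ * (a₄ - a₂) + b₃ * (1 - b₃) = 0)
    (hnorm : r ^ 2 * (a₅ ^ 2 + 1 + γ * a₂ ^ 2 + (γ - 1) * (a₁ + a₂) ^ 2) = 1) :
    0 ≤ v₃ ⬝ᵥ (v₅ - v₃ - v₂) ∧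
    0 ≤ v₂ ⬝ᵥ (v₅ + (γ - 1) • (v₁ + v₂)) ∧
    0 ≤ v₄ ⬝ᵥ (v₅ - v₃ - v₄) ∧
    0 ≤ (v₂ - v₄) ⬝ᵥ ((v₃ + v₄) + (γ - 1) • (v₁ + v₂)) ∧
    0 ≤ v₄ ⬝ᵥ (-(v₃ + v₄) - (γ - 1) • (v₁ + v₂)) + v₂ ⬝ᵥ (v₅ + (γ - 1) • (v₁ + v₂)) ∧
    0 ≤ v₂ ⬝ᵥ ((v₃ + v₄) + (γ - 1) • (v₁ + v₂)) + v₄ ⬝ᵥ (v₅ - v₃ - v₄) ∧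
    v₅ ⬝ᵥ v₅ + γ * (v₂ ⬝ᵥ v₂) + (γ - 1) * ((v₁ + v₂) ⬝ᵥ (v₁ + v₂)) = 1 := by
  subst hv₁ hv₂ hv₃ hv₄ hv₅
  have hw₀ : (r • ![a₅, 1] + (γ - 1) • (r • ![a₁, 0] + r • ![a₂, 0])) 0 = 0 := by
    simp only [Pi.add_apply, Pi.smul_apply, smul_eq_mul, cons_val_zero]
    linear_combination r * hw
  have hu₀ : (r • ![a₅, 1] - r • ![a₃, b₃] - r • ![a₄, 0]) 0 = 0 := by
    simp only [Pi.sub_apply, Pi.smul_apply, smul_eq_mul, cons_val_zero]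
    linear_combination r * hu
  have hv₂₁ : (r • ![a₂, 0]) 1 = 0 := by simp
  have hv₄₁ : (r • ![a₄, 0]) 1 = 0 := by simp
  have hw₂ := vec2_dotProduct_eq_zero hv₂₁ hw₀
  have hw₄ := vec2_dotProduct_eq_zero hv₄₁ hw₀
  have hu₂ := vec2_dotProduct_eq_zero hv₂₁ hu₀
  have hu₄ := vec2_dotProduct_eq_zero hv₄₁ hu₀
  obtain ⟨h₄, h₅, h₆⟩ := dotProduct_eq_zero_of_orthogonal (γ - 1) hw₂ hw₄ hu₂ hu₄
  refine ⟨?_, hw₂.ge, hu₄.ge, h₄.ge, h₅.ge, h₆.ge, ?_⟩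
  all_goals simp only [vec2_dotProduct, Pi.add_apply, Pi.sub_apply, Pi.smul_apply, smul_eq_mul,
    cons_val_zero, cons_val_one]
  · rw [hu]; linear_combination (-r ^ 2) * h₃
  · linear_combination hnorm

section

variable {γ s t D : ℝ}

theorem one_lt_and_two_lt_sq_of_goldenRatio_lt (hγ : goldenRatio < γ) : 1 < γ ∧ 2 < γ ^ 2 := by
  have h1 := one_lt_goldenRatio
  refine ⟨h1.trans hγ, ?_⟩
  nlinarith [goldenRatio_sq]

theorem one_add_sub_sq_add_sub_one_mul_pos (hγ : 1 < γ) (hγ2 : 2 < γ ^ 2)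
    (hs2 : s ^ 2 = γ ^ 2 - 1) (hs : 0 ≤ s) : 0 < 1 + γ - γ ^ 2 + (γ - 1) * s := by
  have : γ ^ 2 - γ - 1 < (γ - 1) * s := by
    refine lt_of_pow_lt_pow_left₀ 2 (mul_nonneg (by linarith) hs) ?_
    linear_combination hγ2 - (γ - 1) ^ 2 * hs2
  linarith

theorem two_add_mul_mul_eq (hs2 : s ^ 2 = γ ^ 2 - 1) (ht2 : t ^ 2 = 1 + γ - γ ^ 2 + (γ - 1) * s)
    (hD : D = -1 - 3 * γ + 2 * γ ^ 2 + (3 - 2 * γ) * s) :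
    (2 + γ * D) * (γ - 1 + s) = 2 * (γ - 1) * t ^ 2 := by
  linear_combination (γ ^ 2 - γ + γ * s) * hD + (2 - 2 * γ) * ht2 + (3 * γ - 2 * γ ^ 2) * hs2

theorem two_add_mul_pos (hγ : 1 < γ) (hs : 0 < s) (ht : 0 < t)
    (hkey : (2 + γ * D) * (γ - 1 + s) = 2 * (γ - 1) * t ^ 2) : 0 < 2 + γ * D := by
  have : 0 < (2 + γ * D) * (γ - 1 + s) := by rw [hkey]; positivity
  exact pos_of_mul_pos_left this (by linarith)

theorem neg_two_mul_div_eq (hγ : 1 < γ) (hs : 0 < s) (ht : 0 < t)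
    (hkey : (2 + γ * D) * (γ - 1 + s) = 2 * (γ - 1) * t ^ 2) :
    -2 * (γ - 1) * t / (γ * (2 + γ * D)) = -(γ - 1 + s) / (γ * t) := by
  have := two_add_mul_pos hγ hs ht hkey
  rw [div_eq_div_iff (by positivity) (by positivity)]
  linear_combination γ * hkey

theorem div_add_div_eq_two_mul_div (hγ : γ ≠ 0) (hD : 2 + γ * D ≠ 0) :
    D * t / (-2 - γ * D) + t / γ = 2 * t / (γ * (2 + γ * D)) := by
  rw [show -2 - γ * D = -(2 + γ * D) by ring, div_neg, ← sub_eq_neg_add,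
    div_sub_div _ _ hγ hD, div_eq_div_iff (mul_ne_zero hγ hD) (mul_ne_zero hγ hD)]
  ring

theorem neg_div_add_div_eq (hγ : 0 < γ) (ht : t ≠ 0) (hs2 : s ^ 2 = γ ^ 2 - 1)
    (ht2 : t ^ 2 = 1 + γ - γ ^ 2 + (γ - 1) * s) :
    -s / ((1 + γ) * t) + (1 - γ ^ 2 - γ * s) * t / (γ + γ ^ 2) = -(γ - 1 + s) / (γ * t) := by
  field_simp
  linear_combination (1 - γ * s - γ ^ 2) * ht2 + (γ - γ ^ 2) * hs2

theorem neg_div_mul_add_div_mul_eq_zero (hγ : 0 < γ) (ht : t ≠ 0) :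
    -s / ((1 + γ) * t) * ((1 - γ ^ 2 - γ * s) * t / (γ + γ ^ 2) - t / γ) +
      (1 + γ + s) / (1 + γ) * (1 - (1 + γ + s) / (1 + γ)) = 0 := by
  field_simp
  ring

theorem sq_add_one_add_mul_sq_add_eq_div (hγ : 1 < γ) (hγ2 : 2 < γ ^ 2) (hs : 0 < s) (ht : 0 < t)
    (hs2 : s ^ 2 = γ ^ 2 - 1) (ht2 : t ^ 2 = 1 + γ - γ ^ 2 + (γ - 1) * s)
    (hkey : (2 + γ * D) * (γ - 1 + s) = 2 * (γ - 1) * t ^ 2) :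
    (-2 * (γ - 1) * t / (γ * (2 + γ * D))) ^ 2 + 1 + γ * (t / γ) ^ 2 +
      (γ - 1) * (D * t / (-2 - γ * D) + t / γ) ^ 2 =
      (-8 - γ + 6 * γ ^ 2 - γ ^ 3 + (-6 + 3 * γ + γ ^ 2) * s) / (γ ^ 2 - 2) := by
  have h2D := two_add_mul_pos hγ hs ht hkey
  have hγ1 : γ - 1 ≠ 0 := by linarith
  have hγ2' : γ ^ 2 - 2 ≠ 0 := by linarith
  rw [div_add_div_eq_two_mul_div (by positivity) h2D.ne', eq_div_of_mul_eq (by positivity) hkey]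
  field_simp
  linear_combination γ * (γ - 1) * ((γ ^ 2 - 2) * t ^ 2 - 2 * (2 * γ ^ 3 - 2 * γ ^ 2 - 2 * γ + 1)
    - 2 * (2 * γ ^ 2 - 2 * γ - 1) * s) * ht2 - γ ^ 3 * (2 * γ - 3) ^ 2 * hs2

end

/-- Feasibility of the constructed rank-two solution for the performance-estimation SDP:
the vectors `v₁, …, v₅ ∈ ℝ²` built from the matrix `P̄` scaled by `√α` satisfy the six
cyclic-monotonicity inequalities and the normalization `Rᵏ = 1`. -/
theorem rank_two_solution_feasible
    (γ : ℝ) (hγ : (1 + Real.sqrt 5) / 2 < γ)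
    (s t D α : ℝ)
    (hs : s = Real.sqrt (γ ^ 2 - 1))
    (ht : t = Real.sqrt (1 + γ - γ ^ 2 + (γ - 1) * s))
    (hD : D = -1 - 3 * γ + 2 * γ ^ 2 + (3 - 2 * γ) * s)
    (hα : α = (γ ^ 2 - 2) / (-8 - γ + 6 * γ ^ 2 - γ ^ 3 + (-6 + 3 * γ + γ ^ 2) * s))
    (v₁ v₂ v₃ v₄ v₅ : Fin 2 → ℝ)
    (hv₁ : v₁ = Real.sqrt α • ![D * t / (-2 - γ * D), 0])
    (hv₂ : v₂ = Real.sqrt α • ![t / γ, 0])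
    (hv₃ : v₃ = Real.sqrt α • ![-s / ((1 + γ) * t), (1 + γ + s) / (1 + γ)])
    (hv₄ : v₄ = Real.sqrt α • ![(1 - γ ^ 2 - γ * s) * t / (γ + γ ^ 2), 0])
    (hv₅ : v₅ = Real.sqrt α • ![-2 * (γ - 1) * t / (γ * (2 + γ * D)), 1]) :
    0 ≤ v₃ ⬝ᵥ (v₅ - v₃ - v₂) ∧
    0 ≤ v₂ ⬝ᵥ (v₅ + (γ - 1) • (v₁ + v₂)) ∧
    0 ≤ v₄ ⬝ᵥ (v₅ - v₃ - v₄) ∧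
    0 ≤ (v₂ - v₄) ⬝ᵥ ((v₃ + v₄) + (γ - 1) • (v₁ + v₂)) ∧
    0 ≤ v₄ ⬝ᵥ (-(v₃ + v₄) - (γ - 1) • (v₁ + v₂)) + v₂ ⬝ᵥ (v₅ + (γ - 1) • (v₁ + v₂)) ∧
    0 ≤ v₂ ⬝ᵥ ((v₃ + v₄) + (γ - 1) • (v₁ + v₂)) + v₄ ⬝ᵥ (v₅ - v₃ - v₄) ∧
    v₅ ⬝ᵥ v₅ + γ * (v₂ ⬝ᵥ v₂) + (γ - 1) * ((v₁ + v₂) ⬝ᵥ (v₁ + v₂)) = 1 := by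
  obtain ⟨hγ1, hγ2⟩ := one_lt_and_two_lt_sq_of_goldenRatio_lt hγ
  have hγ0 : 0 < γ := by linarith
  have hs2 : s ^ 2 = γ ^ 2 - 1 := hs ▸ Real.sq_sqrt (by linarith)
  have hs0 : 0 < s := hs ▸ Real.sqrt_pos.2 (by linarith)
  have hT := one_add_sub_sq_add_sub_one_mul_pos hγ1 hγ2 hs2 hs0.le
  have ht2 : t ^ 2 = 1 + γ - γ ^ 2 + (γ - 1) * s := ht ▸ Real.sq_sqrt hT.le
  have ht0 : 0 < t := ht ▸ Real.sqrt_pos.2 hT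
  have hkey := two_add_mul_mul_eq hs2 ht2 hD
  have hsum := sq_add_one_add_mul_sq_add_eq_div hγ1 hγ2 hs0 ht0 hs2 ht2 hkey
  have hα' : α = ((-2 * (γ - 1) * t / (γ * (2 + γ * D))) ^ 2 + 1 + γ * (t / γ) ^ 2 +
      (γ - 1) * (D * t / (-2 - γ * D) + t / γ) ^ 2)⁻¹ := by
    rw [hsum, inv_div, hα]
  have hpos : 0 < α := by
    rw [hα']; positivity
  apply rank_two_feasible_of_coords hv₁ hv₂ hv₃ hv₄ hv₅
  · rw [div_add_div_eq_two_mul_div hγ0.ne' (two_add_mul_pos hγ1 hs0 ht0 hkey).ne']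
    ring
  · rw [neg_two_mul_div_eq hγ1 hs0 ht0 hkey, neg_div_add_div_eq hγ0 ht0.ne' hs2 ht2]
  · exact neg_div_mul_add_div_mul_eq_zero hγ0 ht0.ne'
  · rw [Real.sq_sqrt hpos.le, hα', inv_mul_cancel₀]
    positivity
end
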